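/- Fix m > 0 and let u, u' ∈ ℝ with u ≠ u'. Let H = L²(EuclideanSpace ℝ (Fin 3), ℂ). Then the families g ↦ D_u(g) ⊕ D_{u'}(g) and g ↦ D_0(g) ⊕ D_0(g) of unitary operators on H ⊕ H are NOT projectively equivalent: there exist no unitary operator U : H ⊕ H → H ⊕ H and no continuous function φ from the parameter space ℝ × EuclideanSpace ℝ (Fin 3) × EuclideanSpace ℝ (Fin 3) × SO(3) to ℂ with |φ(g)| = 1 for all g, such that U ∘ (D_u(g) ⊕ D_{u'}(g)) ∘ U⁻¹ = φ(g) • (D_0(g) ⊕ D_0(g)) for every parameter tuple g = (b, a, v, R). -/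

import Mathlib

open MeasureTheory

noncomputable section

/-- Momentum space `ℝ³`. -/
abbrev E3 : Type := EuclideanSpace ℝ (Fin 3)

/-- The Hilbert space `H = L²(ℝ³, ℂ)` with Lebesgue measure. -/
abbrev Hsp : Type := Lp ℂ 2 (volume : Measure E3)

/-- Action of a `3 × 3` real matrix on `ℝ³` by matrix–vector multiplication. -/
def act (R : Matrix (Fin 3) (Fin 3) ℝ) (x : E3) : E3 :=
  (EuclideanSpace.equiv (Fin 3) ℝ).symm (R.mulVec (EuclideanSpace.equiv (Fin 3) ℝ x))

/-- The pointwise formula for the Galilei operator `D_u(b, a, v, R)` of mass `m`: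
`(D_u(g)ψ)(p) = exp(i(u·b + (‖p‖²/(2m))·b + ⟪p, a⟫)) · ψ(R⁻¹(p − m·v))`. -/
def Dop (m u b : ℝ) (a v : E3) (R : Matrix (Fin 3) (Fin 3) ℝ) (ψ : E3 → ℂ) : E3 → ℂ :=
  fun p => Complex.exp (Complex.I * ((u * b + (‖p‖ ^ 2 / (2 * m)) * b + inner ℝ p a : ℝ) : ℂ)) *
    ψ (act R⁻¹ (p - m • v))

/-- The Hilbert-space direct sum `H ⊕ H`. -/
abbrev HH : Type := WithLp 2 (Hsp × Hsp)

/-- The direct sum `A ⊕ B` of two operators on `H`, acting componentwise on `H ⊕ H`. -/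
def dsum (A B : Hsp →L[ℂ] Hsp) (ψ : HH) : HH :=
  (WithLp.equiv 2 (Hsp × Hsp)).symm
    (A ((WithLp.equiv 2 (Hsp × Hsp)) ψ).1, B ((WithLp.equiv 2 (Hsp × Hsp)) ψ).2)

/-- `S` realizes the Galilei operator `D_u(b,a,v,R)` of mass `m` on `L²(ℝ³, ℂ)`. -/
def Represents (m u b : ℝ) (a v : E3) (R : Matrix (Fin 3) (Fin 3) ℝ)
    (S : Hsp →L[ℂ] Hsp) : Prop :=
  ∀ ψ : Hsp, ⇑(S ψ) =ᵐ[volume] Dop m u b a v R ⇑ψ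

/-- The Galilei parameter space `ℝ × ℝ³ × ℝ³ × SO(3)` (product topology). -/
abbrev GalileiParam : Type :=
  ℝ × E3 × E3 × ↥(Matrix.specialOrthogonalGroup (Fin 3) ℝ)

/-!
Restrict to the parameters `g = (b, a, 0, 1)`, for which `D_u(g)` is multiplication by
`e^{iub} e^{i(b‖p‖²/2m + ⟪p, a⟫)}`. For `b₀ = π / (u - u')` the phases `e^{iub₀}` and `e^{iu'b₀}`
are opposite, so the diagonal vector `Ψ = (x, x)` has `⟪Ψ, (D_u(g) ⊕ D_{u'}(g)) Ψ⟫ = 0` for every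
`a`. Conjugating by `U` and cancelling `φ(g) ≠ 0`, the density `ρ = |(UΨ)₁|² + |(UΨ)₂|²` satisfies
`∫ e^{i⟪p, a⟫} e^{ib₀‖p‖²/2m} ρ(p) dp = 0` for all `a`. Injectivity of the Fourier transform on `L¹`
forces `ρ = 0`, hence `UΨ = 0` and `x = 0`, which is absurd since `L²(ℝ³) ≠ 0`.
-/

open Complex
open scoped FourierTransform InnerProductSpace RealInnerProductSpace ENNReal

section Fourier

variable {V : Type*} [NormedAddCommGroup V] [InnerProductSpace ℝ V] [FiniteDimensional ℝ V]
  [MeasurableSpace V] [BorelSpace V]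

theorem MeasureTheory.Integrable.ae_eq_zero_of_fourier_eq_zero {f : V → ℂ} (hf : Integrable f)
    (h : 𝓕 f = 0) : f =ᵐ[volume] 0 := by
  refine ae_eq_zero_of_integral_contDiff_smul_eq_zero hf.locallyIntegrable fun g _ hgc => ?_
  let G : SchwartzMap V ℂ := (hgc.comp_left (g := ofRealCLM) rfl).toSchwartzMap (by fun_prop)
  have hG : 𝓕 (𝓕⁻ G) = G := FourierTransform.fourier_fourierInv_eq G
  calc ∫ x, g x • f x = ∫ x, f x • 𝓕 (𝓕⁻ G : SchwartzMap V ℂ) x := by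
        change _ = ∫ x, f x • (𝓕 (𝓕⁻ G) : SchwartzMap V ℂ) x
        rw [hG]
        congr 1 with x
        simp [G, mul_comm]
    _ = ∫ ξ, 𝓕 f ξ • (𝓕⁻ G : SchwartzMap V ℂ) ξ := by
        have := VectorFourier.integral_fourierIntegral_smul_eq_flip (L := innerₗ V)
          Real.continuous_fourierChar continuous_inner hf ((𝓕⁻ G).integrable (μ := volume))
        rw [flip_innerₗ] at this
        exact this.symm
    _ = 0 := by simp [h]

theorem MeasureTheory.Integrable.ae_eq_zero_of_integral_exp_inner_mul_eq_zero {f : V → ℂ}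
    (hf : Integrable f) (h : ∀ a : V, ∫ p, exp (I * (⟪p, a⟫ : ℝ)) * f p = 0) :
    f =ᵐ[volume] 0 := by
  refine hf.ae_eq_zero_of_fourier_eq_zero (funext fun w => ?_)
  rw [Real.fourier_eq', Pi.zero_apply, ← h ((-(2 * Real.pi)) • w)]
  congr 1 with p
  rw [smul_eq_mul, real_inner_smul_right]
  push_cast
  ring_nf

end Fourier

namespace MeasureTheory

variable {α : Type*} [MeasurableSpace α] {μ : Measure α}

theorem Lp.nontrivial_of_measure_ne_zero_ne_top {E : Type*} [NormedAddCommGroup E]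
    [Nontrivial E] {p : ℝ≥0∞} (hp : p ≠ 0) {s : Set α} (hs : MeasurableSet s) (hμs : μ s ≠ 0)
    (hμs' : μ s ≠ ∞) : Nontrivial (Lp E p μ) := by
  obtain ⟨c, hc⟩ := exists_ne (0 : E)
  refine nontrivial_of_ne (indicatorConstLp p hs hμs' c) 0 fun h0 => ?_
  have hnorm : ‖indicatorConstLp p hs hμs' c‖ = _ := norm_indicatorConstLp' hp hμs
  rw [h0, norm_zero] at hnorm
  have : 0 < μ.real s := ENNReal.toReal_pos hμs hμs'
  have : 0 < ‖c‖ * μ.real s ^ (1 / p.toReal) := by positivity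
  linarith

def L2.mulOp (w : Lp ℂ ∞ μ) : Lp ℂ 2 μ →L[ℂ] Lp ℂ 2 μ :=
  (ContinuousLinearMap.mul ℂ ℂ).holderL μ ∞ 2 2 w

theorem L2.coeFn_mulOp (w : Lp ℂ ∞ μ) (y : Lp ℂ 2 μ) :
    L2.mulOp w y =ᵐ[μ] fun x => w x * y x :=
  (ContinuousLinearMap.mul ℂ ℂ).coeFn_holder w y

theorem L2.inner_mulOp_self (w : Lp ℂ ∞ μ) (y : Lp ℂ 2 μ) :
    ⟪y, L2.mulOp w y⟫_ℂ = ∫ x, w x * ((‖y x‖ ^ 2 : ℝ) : ℂ) ∂μ := by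
  rw [L2.inner_def]
  refine integral_congr_ae ?_
  filter_upwards [L2.coeFn_mulOp w y] with x hx
  rw [hx, RCLike.inner_apply, mul_assoc, Complex.mul_conj', Complex.ofReal_pow]

end MeasureTheory

section Galilei

variable (m : ℝ)

def galileiPhase (u b : ℝ) (a p : E3) : ℂ :=
  exp (I * ((u * b + (‖p‖ ^ 2 / (2 * m)) * b + ⟪p, a⟫ : ℝ) : ℂ))

theorem norm_galileiPhase (u b : ℝ) (a p : E3) : ‖galileiPhase m u b a p‖ = 1 :=
  norm_exp_I_mul_ofReal _

theorem galileiPhase_eq_exp_mul (u b : ℝ) (a p : E3) :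
    galileiPhase m u b a p = exp (I * (u * b + ⟪p, a⟫ : ℝ)) * galileiPhase m 0 b 0 p := by
  simp only [galileiPhase, ← Complex.exp_add, inner_zero_right]
  congr 1
  push_cast
  ring

theorem memLp_galileiPhase (u b : ℝ) (a : E3) : MemLp (galileiPhase m u b a) ∞ volume :=
  memLp_top_of_bound (by unfold galileiPhase; fun_prop) 1
    (ae_of_all _ fun p => (norm_galileiPhase m u b a p).le)

theorem integrable_galileiPhase_mul (u b : ℝ) (a : E3) {f : E3 → ℂ} (hf : Integrable f) :
    Integrable (fun p => galileiPhase m u b a p * f p) :=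
  hf.bdd_mul (memLp_galileiPhase m u b a).1
    (ae_of_all _ fun p => (norm_galileiPhase m u b a p).le)

/-- The operator `D_u(b, a, 0, 1)`: multiplication by `galileiPhase m u b a`. -/
def galileiMulOp (u b : ℝ) (a : E3) : Hsp →L[ℂ] Hsp :=
  L2.mulOp (memLp_galileiPhase m u b a).toLp

theorem coeFn_galileiMulOp (u b : ℝ) (a : E3) (ψ : Hsp) :
    galileiMulOp m u b a ψ =ᵐ[volume] fun p => galileiPhase m u b a p * ψ p := by
  filter_upwards [L2.coeFn_mulOp _ ψ, (memLp_galileiPhase m u b a).coeFn_toLp] with p h1 h2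
  rw [galileiMulOp, h1, h2]

theorem represents_galileiMulOp (u b : ℝ) (a : E3) :
    Represents m u b a 0
      ((1 : Matrix.specialOrthogonalGroup (Fin 3) ℝ) : Matrix (Fin 3) (Fin 3) ℝ)
      (galileiMulOp m u b a) := by
  intro ψ
  filter_upwards [coeFn_galileiMulOp m u b a ψ] with p hp
  simp [hp, Dop, act, galileiPhase]

theorem inner_galileiMulOp_self (u b : ℝ) (a : E3) (y : Hsp) :
    ⟪y, galileiMulOp m u b a y⟫_ℂ =
      exp (I * (u * b : ℝ)) * ∫ p, galileiPhase m 0 b a p * (‖y p‖ ^ 2 : ℝ) := by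
  rw [galileiMulOp, L2.inner_mulOp_self, ← integral_const_mul]
  refine integral_congr_ae ?_
  filter_upwards [(memLp_galileiPhase m u b a).coeFn_toLp] with p hp
  rw [hp, galileiPhase_eq_exp_mul, galileiPhase_eq_exp_mul m 0 b a p, zero_mul, zero_add,
    ofReal_add, mul_add, Complex.exp_add]
  ring

theorem eq_zero_of_forall_inner_dsum_galileiMulOp_eq_zero (b : ℝ) (Y : HH)
    (h : ∀ a, ⟪Y, dsum (galileiMulOp m 0 b a) (galileiMulOp m 0 b a) Y⟫_ℂ = 0) : Y = 0 := by
  set ρ : E3 → ℝ := fun p => ‖Y.fst p‖ ^ 2 + ‖Y.snd p‖ ^ 2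
  have hsq : ∀ y : Hsp, Integrable (fun p => ((‖y p‖ ^ 2 : ℝ) : ℂ)) :=
    fun y => ((Lp.memLp y).integrable_norm_pow two_ne_zero).ofReal
  have hρ : ρ =ᵐ[volume] 0 := by
    have hf := Integrable.ae_eq_zero_of_integral_exp_inner_mul_eq_zero
      (f := fun p => galileiPhase m 0 b 0 p * ρ p) ?_ fun a => ?_
    · filter_upwards [hf] with p hp
      simpa [← norm_eq_zero (a := galileiPhase _ _ _ _ _), norm_galileiPhase] using hp
    · simpa [ρ] using integrable_galileiPhase_mul m 0 b 0 ((hsq Y.fst).add (hsq Y.snd))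
    · have ha := h a
      change ⟪Y.fst, galileiMulOp m 0 b a Y.fst⟫_ℂ
        + ⟪Y.snd, galileiMulOp m 0 b a Y.snd⟫_ℂ = 0 at ha
      simp only [inner_galileiMulOp_self, zero_mul, ofReal_zero, mul_zero, Complex.exp_zero,
        one_mul] at ha
      rw [← integral_add (integrable_galileiPhase_mul m 0 b a (hsq _))
        (integrable_galileiPhase_mul m 0 b a (hsq _))] at ha
      rw [← ha]
      congr 1 with p
      simp [ρ, galileiPhase_eq_exp_mul m 0 b a]
      ring
  have hcomp : ∀ᵐ p ∂volume, Y.fst p = 0 ∧ Y.snd p = 0 := hρ.mono fun p hp => by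
    simpa using (add_eq_zero_iff_of_nonneg (sq_nonneg _) (sq_nonneg _)).1 hp
  exact WithLp.ofLp_injective 2 <| Prod.ext
    (Lp.eq_zero_iff_ae_eq_zero.2 (hcomp.mono fun _ => And.left))
    (Lp.eq_zero_iff_ae_eq_zero.2 (hcomp.mono fun _ => And.right))

end Galilei

theorem LinearIsometryEquiv.inner_self_eq_of_conj_eq_smul {𝕜 H : Type*} [RCLike 𝕜]
    [NormedAddCommGroup H] [InnerProductSpace 𝕜 H] (U : H ≃ₗᵢ[𝕜] H) {A B : H → H} {c : 𝕜}
    (h : ∀ ψ, U (A (U.symm ψ)) = c • B ψ) (Ψ : H) :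
    ⟪Ψ, A Ψ⟫_𝕜 = c * ⟪U Ψ, B (U Ψ)⟫_𝕜 := by
  rw [← U.inner_map_map, ← inner_smul_right, ← h, U.symm_apply_apply]

theorem exp_I_mul_add_exp_I_mul_pi_div_sub_eq_zero {u u' : ℝ} (h : u ≠ u') :
    exp (I * (u * (Real.pi / (u - u')) : ℝ)) + exp (I * (u' * (Real.pi / (u - u')) : ℝ))
      = 0 := by
  have hshift : u * (Real.pi / (u - u')) = u' * (Real.pi / (u - u')) + Real.pi := by
    field_simp [sub_ne_zero.2 h]
    ring
  rw [hshift, ofReal_add, mul_add, Complex.exp_add, mul_comm I (Real.pi : ℂ),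
    Complex.exp_pi_mul_I]
  ring

theorem inner_dsum_galileiMulOp_diag (m u u' b : ℝ) (a : E3) (x : Hsp) :
    ⟪WithLp.toLp 2 (x, x),
        dsum (galileiMulOp m u b a) (galileiMulOp m u' b a) (WithLp.toLp 2 (x, x))⟫_ℂ
      = (exp (I * (u * b : ℝ)) + exp (I * (u' * b : ℝ))) *
          ∫ p, galileiPhase m 0 b a p * (‖x p‖ ^ 2 : ℝ) := by
  change ⟪x, galileiMulOp m u b a x⟫_ℂ + ⟪x, galileiMulOp m u' b a x⟫_ℂ = _
  rw [inner_galileiMulOp_self, inner_galileiMulOp_self, add_mul]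

instance : Nontrivial Hsp :=
  Lp.nontrivial_of_measure_ne_zero_ne_top two_ne_zero
    (measurableSet_ball (x := (0 : E3)) (ε := 1))
    (Metric.isOpen_ball.measure_ne_zero volume (Metric.nonempty_ball.2 one_pos))
    measure_ball_lt_top.ne

theorem statement12_general
    (m : ℝ) (u u' : ℝ) (huu' : u ≠ u') :
    ¬ ∃ (U : HH ≃ₗᵢ[ℂ] HH) (φ : GalileiParam → ℂ),
        Continuous φ ∧ (∀ g : GalileiParam, ‖φ g‖ = 1) ∧
        ∀ (g : GalileiParam) (Su Su' S0 : Hsp →L[ℂ] Hsp),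
          Represents m u g.1 g.2.1 g.2.2.1 (g.2.2.2 : Matrix (Fin 3) (Fin 3) ℝ) Su →
          Represents m u' g.1 g.2.1 g.2.2.1 (g.2.2.2 : Matrix (Fin 3) (Fin 3) ℝ) Su' →
          Represents m 0 g.1 g.2.1 g.2.2.1 (g.2.2.2 : Matrix (Fin 3) (Fin 3) ℝ) S0 →
          ∀ ψ : HH, U (dsum Su Su' (U.symm ψ)) = φ g • dsum S0 S0 ψ := by
  rintro ⟨U, φ, -, hφ, hconj⟩
  obtain ⟨x, hx⟩ := exists_ne (0 : Hsp)
  set b₀ := Real.pi / (u - u')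
  set Ψ : HH := WithLp.toLp 2 (x, x)
  have hUΨ : U Ψ = 0 := by
    refine eq_zero_of_forall_inner_dsum_galileiMulOp_eq_zero m b₀ _ fun a => ?_
    have h := U.inner_self_eq_of_conj_eq_smul (hconj (b₀, a, 0, 1) _ _ _
      (represents_galileiMulOp m u b₀ a) (represents_galileiMulOp m u' b₀ a)
      (represents_galileiMulOp m 0 b₀ a)) Ψ
    rw [inner_dsum_galileiMulOp_diag, exp_I_mul_add_exp_I_mul_pi_div_sub_eq_zero huu',
      zero_mul] at h
    refine (mul_eq_zero.1 h.symm).resolve_left fun hφ0 => ?_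
    simpa [hφ0] using hφ (b₀, a, 0, 1)
  exact hx (congrArg WithLp.fst (U.map_eq_zero_iff.1 hUΨ))

/-- For `m > 0` and `u ≠ u'`, the families `g ↦ D_u(g) ⊕ D_{u'}(g)` and
`g ↦ D_0(g) ⊕ D_0(g)` of unitary operators on `H ⊕ H` are NOT projectively equivalent:
there is no unitary `U : H ⊕ H → H ⊕ H` and no continuous unimodular function `φ` on the
parameter space with `U ∘ (D_u(g) ⊕ D_{u'}(g)) ∘ U⁻¹ = φ(g) • (D_0(g) ⊕ D_0(g))` for all
parameter tuples `g = (b, a, v, R)`. -/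
theorem statement12
    (m : ℝ) (hm : 0 < m) (u u' : ℝ) (huu' : u ≠ u') :
    ¬ ∃ (U : HH ≃ₗᵢ[ℂ] HH) (φ : GalileiParam → ℂ),
        Continuous φ ∧ (∀ g : GalileiParam, ‖φ g‖ = 1) ∧
        ∀ (g : GalileiParam) (Su Su' S0 : Hsp →L[ℂ] Hsp),
          Represents m u g.1 g.2.1 g.2.2.1 (g.2.2.2 : Matrix (Fin 3) (Fin 3) ℝ) Su →
          Represents m u' g.1 g.2.1 g.2.2.1 (g.2.2.2 : Matrix (Fin 3) (Fin 3) ℝ) Su' →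
          Represents m 0 g.1 g.2.1 g.2.2.1 (g.2.2.2 : Matrix (Fin 3) (Fin 3) ℝ) S0 →
          ∀ ψ : HH, U (dsum Su Su' (U.symm ψ)) = φ g • dsum S0 S0 ψ :=
  statement12_general m u u' huu'

end
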